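/- arXiv:2003.12151 — 4 statements merged into one kernel-verified Lean document; each statement's English description precedes it below -/
import Mathlib

section
/- Let π : X → U be a policy and let μ, μ̂ ∈ 𝒫(X). Suppose the policy value function J_μ(π,·) satisfies |J_μ(π,x) − J_μ(π,y)| ≤ Q_Lip·1_{x≠y} for all x, y ∈ X, where Q_Lip := L1/(1 − βK1/2). Then ‖J_μ(π,·) − J_{μ̂}(π,·)‖_∞ ≤ (L1 + βK1Q_Lip/2) ‖μ − μ̂‖₁ / (1 − β). (Estimate (nneqq1) in the proof of Theorem 1.) -/
namespace MFG

open Finset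

def IsProb {E : Type*} [Fintype E] (μ : E → ℝ) : Prop :=
  (∀ e, 0 ≤ μ e) ∧ ∑ e, μ e = 1

def l1 {E : Type*} [Fintype E] (μ ν : E → ℝ) : ℝ :=
  ∑ e, |μ e - ν e|

def ind {E : Type*} [DecidableEq E] (x y : E) : ℝ :=
  if x = y then 0 else 1

def RewardLip {X A : Type*} [Fintype X] [Fintype A] [DecidableEq X] [DecidableEq A]
    (r : X → A → (X → ℝ) → ℝ) (L1 : ℝ) : Prop :=
  ∀ x x' a a' μ μ', IsProb μ → IsProb μ' →
    |r x a μ - r x' a' μ'| ≤ L1 * (ind x x' + 2 * ind a a' + l1 μ μ')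

def KernelLip {X A : Type*} [Fintype X] [Fintype A] [DecidableEq X] [DecidableEq A]
    (p : X → A → (X → ℝ) → X → ℝ) (K1 : ℝ) : Prop :=
  ∀ x x' a a' μ μ', IsProb μ → IsProb μ' →
    l1 (p x a μ) (p x' a' μ') ≤ K1 * (ind x x' + 2 * ind a a' + l1 μ μ')

def IsKernel {X A : Type*} [Fintype X] [Fintype A]
    (p : X → A → (X → ℝ) → X → ℝ) : Prop :=
  ∀ x a μ, IsProb μ → IsProb (p x a μ)

def RewardNonneg {X A : Type*} [Fintype X] [Fintype A]
    (r : X → A → (X → ℝ) → ℝ) : Prop :=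
  ∀ x a μ, IsProb μ → 0 ≤ r x a μ

def OmegaLip {A : Type*} [Fintype A] (Ω : (A → ℝ) → ℝ) (Lreg : ℝ) : Prop :=
  ∀ u v, IsProb u → IsProb v → |Ω u - Ω v| ≤ Lreg * l1 u v

def StrongConvex {A : Type*} [Fintype A] (Ω : (A → ℝ) → ℝ)
    (DΩ : (A → ℝ) → (A → ℝ)) (ρ : ℝ) : Prop :=
  ∀ u v, IsProb u → IsProb v →
    Ω u + (∑ a, DΩ u a * (v a - u a)) + ρ / 2 * (l1 u v) ^ 2 ≤ Ω v

noncomputable def Tbell {X A : Type*} [Fintype X] [Fintype A]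
    (r : X → A → (X → ℝ) → ℝ) (p : X → A → (X → ℝ) → X → ℝ)
    (Ω : (A → ℝ) → ℝ) (β : ℝ) (μ : X → ℝ) (v : X → ℝ) (x : X) : ℝ :=
  ⨆ u : {w : A → ℝ // IsProb w},
    ((∑ a, r x a μ * u.1 a) - Ω u.1 + β * ∑ y, v y * (∑ a, p x a μ y * u.1 a))

noncomputable def Qmax {X A : Type*} [Fintype A] (Q : X → (A → ℝ) → ℝ) (y : X) : ℝ :=
  ⨆ u : {w : A → ℝ // IsProb w}, Q y u.1

noncomputable def Lbell {X A : Type*} [Fintype X] [Fintype A]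
    (r : X → A → (X → ℝ) → ℝ) (p : X → A → (X → ℝ) → X → ℝ)
    (Ω : (A → ℝ) → ℝ) (β : ℝ) (μ : X → ℝ) (Q : X → (A → ℝ) → ℝ)
    (x : X) (u : A → ℝ) : ℝ :=
  (∑ a, r x a μ * u a) - Ω u + β * ∑ y, Qmax Q y * (∑ a, p x a μ y * u a)

def BddFixedPoint {X A : Type*} [Fintype X] [Fintype A]
    (r : X → A → (X → ℝ) → ℝ) (p : X → A → (X → ℝ) → X → ℝ)
    (Ω : (A → ℝ) → ℝ) (β : ℝ) (μ : X → ℝ) (Q : X → (A → ℝ) → ℝ) : Prop :=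
  (∃ C, ∀ x u, IsProb u → |Q x u| ≤ C) ∧
  (∀ x u, IsProb u → Q x u = Lbell r p Ω β μ Q x u)

/-- estimate (nneqq1) in the proof of Theorem 1:
`‖J_μ(π,·) - J_{μ̂}(π,·)‖_∞ ≤ (L1 + β K1 Q_Lip/2) ‖μ - μ̂‖₁ / (1 - β)`. -/
theorem statement12 {X A : Type*} [Fintype X] [Fintype A] [Nonempty X] [Nonempty A]
    [DecidableEq X] [DecidableEq A]
    (r : X → A → (X → ℝ) → ℝ) (p : X → A → (X → ℝ) → X → ℝ)
    (L1 K1 : ℝ) (hL1 : 0 ≤ L1) (hK1 : 0 ≤ K1)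
    (hr_nonneg : RewardNonneg r) (hr : RewardLip r L1)
    (hp_prob : IsKernel p) (hp : KernelLip p K1)
    (Ω : (A → ℝ) → ℝ) (hΩ : ContinuousOn Ω {u | IsProb u})
    (β : ℝ) (hβ0 : 0 < β) (hβ1 : β < 1) (hβK : β * K1 / 2 < 1)
    (π : X → A → ℝ) (hπ : ∀ x, IsProb (π x))
    (μ μ' : X → ℝ) (hμ : IsProb μ) (hμ' : IsProb μ')
    (J J' : X → ℝ)
    (hJ : ∀ x, J x =
      (∑ a, r x a μ * π x a) - Ω (π x) + β * ∑ y, J y * (∑ a, p x a μ y * π x a))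
    (hJ' : ∀ x, J' x =
      (∑ a, r x a μ' * π x a) - Ω (π x) + β * ∑ y, J' y * (∑ a, p x a μ' y * π x a))
    (hJlip : ∀ x y, |J x - J y| ≤ (L1 / (1 - β * K1 / 2)) * ind x y) :
    ∀ x, |J x - J' x| ≤
      (L1 + β * K1 * (L1 / (1 - β * K1 / 2)) / 2) * l1 μ μ' / (1 - β) := by

  classical
  set Qlip := L1 / (1 - β * K1 / 2) with hQdef
  have hden : (0:ℝ) < 1 - β * K1 / 2 := by linarith
  have hQ0 : 0 ≤ Qlip := div_nonneg hL1 hden.le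
  have hl1 : 0 ≤ l1 μ μ' := Finset.sum_nonneg fun _ _ => abs_nonneg _
  have hβ1' : (0:ℝ) < 1 - β := by linarith
  -- maximizer of |J - J'|
  obtain ⟨x0, -, hx0⟩ := Finset.exists_max_image Finset.univ (fun x => |J x - J' x|)
    ⟨Classical.arbitrary X, Finset.mem_univ _⟩
  have hx0' : ∀ x, |J x - J' x| ≤ |J x0 - J' x0| := fun x => hx0 x (Finset.mem_univ x)
  set D := |J x0 - J' x0| with hDdef
  -- max/min of J
  obtain ⟨xM, -, hxM⟩ := Finset.exists_max_image Finset.univ J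
    ⟨Classical.arbitrary X, Finset.mem_univ _⟩
  obtain ⟨xm, -, hxm⟩ := Finset.exists_min_image Finset.univ J
    ⟨Classical.arbitrary X, Finset.mem_univ _⟩
  set c := (J xM + J xm) / 2 with hcdef
  have hMm : J xM - J xm ≤ Qlip := by
    by_cases h : xM = xm
    · rw [h]; simpa using hQ0
    · have := hJlip xM xm
      rw [ind] at this
      simp only [h, if_false, mul_one] at this
      exact le_trans (le_abs_self _) this
  have hc : ∀ y, |J y - c| ≤ Qlip / 2 := by
    intro y
    have h1 := hxM y (Finset.mem_univ y)
    have h2 := hxm y (Finset.mem_univ y)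
    rw [abs_le]; constructor <;> [skip; skip] <;> rw [hcdef] <;> linarith
  -- zero total mass of kernel difference
  have hsum0 : ∑ y, ∑ a, (p x0 a μ y - p x0 a μ' y) * π x0 a = 0 := by
    rw [Finset.sum_comm]
    refine Finset.sum_eq_zero fun a _ => ?_
    rw [← Finset.sum_mul, Finset.sum_sub_distrib, (hp_prob x0 a μ hμ).2,
      (hp_prob x0 a μ' hμ').2, sub_self, zero_mul]
  -- algebraic decomposition
  have hdec : J x0 - J' x0 =
      (∑ a, (r x0 a μ - r x0 a μ') * π x0 a)
      + β * (∑ y, (J y - c) * (∑ a, (p x0 a μ y - p x0 a μ' y) * π x0 a))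
      + β * (∑ y, (J y - J' y) * (∑ a, p x0 a μ' y * π x0 a)) := by
    have e1 : ∑ a, (r x0 a μ - r x0 a μ') * π x0 a
        = (∑ a, r x0 a μ * π x0 a) - ∑ a, r x0 a μ' * π x0 a := by
      rw [← Finset.sum_sub_distrib]; congr 1; ext a; ring
    have e2 : ∑ y, (J y - c) * (∑ a, (p x0 a μ y - p x0 a μ' y) * π x0 a)
        = (∑ y, J y * (∑ a, (p x0 a μ y - p x0 a μ' y) * π x0 a))
          - c * ∑ y, ∑ a, (p x0 a μ y - p x0 a μ' y) * π x0 a := by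
      rw [Finset.mul_sum, ← Finset.sum_sub_distrib]; congr 1; ext y; ring
    rw [hJ x0, hJ' x0, e1, e2, hsum0, mul_zero, sub_zero]
    have e3 : ∀ y, J y * (∑ a, (p x0 a μ y - p x0 a μ' y) * π x0 a)
        = J y * (∑ a, p x0 a μ y * π x0 a) - J y * (∑ a, p x0 a μ' y * π x0 a) := by
      intro y
      rw [← mul_sub, ← Finset.sum_sub_distrib]; congr 2; ext a; ring
    have e4 : ∀ y, (J y - J' y) * (∑ a, p x0 a μ' y * π x0 a)
        = J y * (∑ a, p x0 a μ' y * π x0 a) - J' y * (∑ a, p x0 a μ' y * π x0 a) := by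
      intro y; ring
    simp only [e3, e4, Finset.sum_sub_distrib]
    ring
  -- bound term 1
  have hb1 : |∑ a, (r x0 a μ - r x0 a μ') * π x0 a| ≤ L1 * l1 μ μ' := by
    calc |∑ a, (r x0 a μ - r x0 a μ') * π x0 a|
        ≤ ∑ a, |(r x0 a μ - r x0 a μ') * π x0 a| := Finset.abs_sum_le_sum_abs _ _
      _ ≤ ∑ a, (L1 * l1 μ μ') * π x0 a := by
          refine Finset.sum_le_sum fun a _ => ?_
          rw [abs_mul, abs_of_nonneg ((hπ x0).1 a)]
          refine mul_le_mul_of_nonneg_right ?_ ((hπ x0).1 a)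
          have := hr x0 x0 a a μ μ' hμ hμ'
          simpa [ind] using this
      _ = L1 * l1 μ μ' := by rw [← Finset.mul_sum, (hπ x0).2, mul_one]
  -- bound term 2
  have hb2 : |∑ y, (J y - c) * (∑ a, (p x0 a μ y - p x0 a μ' y) * π x0 a)|
      ≤ Qlip / 2 * (K1 * l1 μ μ') := by
    calc |∑ y, (J y - c) * (∑ a, (p x0 a μ y - p x0 a μ' y) * π x0 a)|
        ≤ ∑ y, |(J y - c)| * |∑ a, (p x0 a μ y - p x0 a μ' y) * π x0 a| := by
          refine le_trans (Finset.abs_sum_le_sum_abs _ _) ?_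
          refine Finset.sum_le_sum fun y _ => ?_
          rw [abs_mul]
      _ ≤ ∑ y, (Qlip / 2) * |∑ a, (p x0 a μ y - p x0 a μ' y) * π x0 a| := by
          refine Finset.sum_le_sum fun y _ => ?_
          exact mul_le_mul_of_nonneg_right (hc y) (abs_nonneg _)
      _ = (Qlip / 2) * ∑ y, |∑ a, (p x0 a μ y - p x0 a μ' y) * π x0 a| := by
          rw [Finset.mul_sum]
      _ ≤ (Qlip / 2) * (K1 * l1 μ μ') := by
          refine mul_le_mul_of_nonneg_left ?_ (by positivity)
          calc ∑ y, |∑ a, (p x0 a μ y - p x0 a μ' y) * π x0 a|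
              ≤ ∑ y, ∑ a, |p x0 a μ y - p x0 a μ' y| * π x0 a := by
                refine Finset.sum_le_sum fun y _ => ?_
                refine le_trans (Finset.abs_sum_le_sum_abs _ _) ?_
                refine Finset.sum_le_sum fun a _ => ?_
                rw [abs_mul, abs_of_nonneg ((hπ x0).1 a)]
            _ = ∑ a, (∑ y, |p x0 a μ y - p x0 a μ' y|) * π x0 a := by
                rw [Finset.sum_comm]; congr 1; ext a; rw [Finset.sum_mul]
            _ ≤ ∑ a, (K1 * l1 μ μ') * π x0 a := by
                refine Finset.sum_le_sum fun a _ => ?_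
                refine mul_le_mul_of_nonneg_right ?_ ((hπ x0).1 a)
                have := hp x0 x0 a a μ μ' hμ hμ'
                simpa [ind, l1] using this
            _ = K1 * l1 μ μ' := by rw [← Finset.mul_sum, (hπ x0).2, mul_one]
  -- bound term 3
  have hPsum : ∑ y, ∑ a, p x0 a μ' y * π x0 a = 1 := by
    rw [Finset.sum_comm]
    have : ∀ a, ∑ y, p x0 a μ' y * π x0 a = π x0 a := by
      intro a; rw [← Finset.sum_mul, (hp_prob x0 a μ' hμ').2, one_mul]
    simp only [this]; exact (hπ x0).2
  have hb3 : |∑ y, (J y - J' y) * (∑ a, p x0 a μ' y * π x0 a)| ≤ D := by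
    calc |∑ y, (J y - J' y) * (∑ a, p x0 a μ' y * π x0 a)|
        ≤ ∑ y, |J y - J' y| * (∑ a, p x0 a μ' y * π x0 a) := by
          refine le_trans (Finset.abs_sum_le_sum_abs _ _) ?_
          refine Finset.sum_le_sum fun y _ => ?_
          rw [abs_mul, abs_of_nonneg (Finset.sum_nonneg fun a _ =>
            mul_nonneg ((hp_prob x0 a μ' hμ').1 y) ((hπ x0).1 a))]
      _ ≤ ∑ y, D * (∑ a, p x0 a μ' y * π x0 a) := by
          refine Finset.sum_le_sum fun y _ => ?_
          refine mul_le_mul_of_nonneg_right (hx0' y) ?_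
          exact Finset.sum_nonneg fun a _ =>
            mul_nonneg ((hp_prob x0 a μ' hμ').1 y) ((hπ x0).1 a)
      _ = D := by rw [← Finset.mul_sum, hPsum, mul_one]
  -- combine
  have hβpos : 0 ≤ β := hβ0.le
  have hkey : D ≤ L1 * l1 μ μ' + β * (Qlip / 2 * (K1 * l1 μ μ')) + β * D := by
    calc D = |(∑ a, (r x0 a μ - r x0 a μ') * π x0 a)
        + β * (∑ y, (J y - c) * (∑ a, (p x0 a μ y - p x0 a μ' y) * π x0 a))
        + β * (∑ y, (J y - J' y) * (∑ a, p x0 a μ' y * π x0 a))| := by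
          rw [hDdef, hdec]
      _ ≤ |∑ a, (r x0 a μ - r x0 a μ') * π x0 a|
          + |β * (∑ y, (J y - c) * (∑ a, (p x0 a μ y - p x0 a μ' y) * π x0 a))|
          + |β * (∑ y, (J y - J' y) * (∑ a, p x0 a μ' y * π x0 a))| :=
          le_trans (abs_add_le _ _) (by gcongr; exact abs_add_le _ _)
      _ ≤ L1 * l1 μ μ' + β * (Qlip / 2 * (K1 * l1 μ μ')) + β * D := by
          rw [abs_mul, abs_mul, abs_of_nonneg hβpos]
          gcongr
  have hDle : D ≤ (L1 + β * K1 * Qlip / 2) * l1 μ μ' / (1 - β) := by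
    rw [le_div_iff₀ hβ1']
    nlinarith [hkey]
  intro x
  exact le_trans (hx0' x) hDle


end MFG
end

section
/- Let μ ∈ 𝒫(X), let π, π̂ : X → U be policies with sup_{x∈X} ‖π(x) − π̂(x)‖₁ ≤ ε, and suppose the policy value function J_μ(π,·) satisfies |J_μ(π,x) − J_μ(π,y)| ≤ Q_Lip·1_{x≠y} for all x, y ∈ X, where Q_Lip := L1/(1 − βK1/2). Then ‖J_μ(π,·) − J_μ(π̂,·)‖_∞ ≤ (L1 + L_reg + βK1Q_Lip/2) ε / (1 − β). (Estimate (nneqq2) in the proof of Theorem 1.) -/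
namespace MFG

open Finset

lemma center_bound {E : Type*} [Fintype E] [Nonempty E] (f w : E → ℝ) (D : ℝ)
    (hD : ∀ e e', |f e - f e'| ≤ D) (hw : ∑ e, w e = 0) :
    |∑ e, f e * w e| ≤ D / 2 * ∑ e, |w e| := by
  obtain ⟨eM, -, heM⟩ := Finset.exists_max_image (Finset.univ : Finset E) f
    ⟨Classical.arbitrary E, Finset.mem_univ _⟩
  obtain ⟨em, -, hem⟩ := Finset.exists_min_image (Finset.univ : Finset E) f
    ⟨Classical.arbitrary E, Finset.mem_univ _⟩
  set c := (f eM + f em) / 2 with hc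
  have hfd : f eM - f em ≤ D := le_trans (le_abs_self _) (hD eM em)
  have key : ∀ e, |f e - c| ≤ D / 2 := by
    intro e
    have h1 := heM e (Finset.mem_univ e)
    have h2 := hem e (Finset.mem_univ e)
    rw [abs_le]
    constructor <;> [skip; skip] <;> simp only [hc] <;> linarith
  have hrw : ∑ e, f e * w e = ∑ e, (f e - c) * w e := by
    simp only [sub_mul, Finset.sum_sub_distrib, ← Finset.mul_sum, hw, mul_zero, sub_zero]
  rw [hrw]
  calc |∑ e, (f e - c) * w e| ≤ ∑ e, |(f e - c) * w e| := Finset.abs_sum_le_sum_abs _ _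
    _ ≤ ∑ e, D / 2 * |w e| := Finset.sum_le_sum (fun e _ => by
        rw [abs_mul]; exact mul_le_mul_of_nonneg_right (key e) (abs_nonneg _))
    _ = D / 2 * ∑ e, |w e| := by rw [Finset.mul_sum]

lemma l1_nonneg {E : Type*} [Fintype E] (μ ν : E → ℝ) : 0 ≤ l1 μ ν :=
  Finset.sum_nonneg fun _ _ => abs_nonneg _

lemma l1_self {E : Type*} [Fintype E] (μ : E → ℝ) : l1 μ μ = 0 := by
  simp [l1]

lemma ind_self {E : Type*} [DecidableEq E] (x : E) : ind x x = 0 := by simp [ind]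

lemma ind_le_one {E : Type*} [DecidableEq E] (x y : E) : ind x y ≤ 1 := by
  unfold ind; split <;> norm_num

lemma ind_nonneg {E : Type*} [DecidableEq E] (x y : E) : 0 ≤ ind x y := by
  unfold ind; split <;> norm_num

/-- estimate (nneqq2) in the proof of Theorem 1:
`‖J_μ(π,·) - J_μ(π̂,·)‖_∞ ≤ (L1 + L_reg + β K1 Q_Lip/2) ε / (1 - β)`. -/
theorem statement13 {X A : Type*} [Fintype X] [Fintype A] [Nonempty X] [Nonempty A]
    [DecidableEq X] [DecidableEq A]
    (r : X → A → (X → ℝ) → ℝ) (p : X → A → (X → ℝ) → X → ℝ)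
    (L1 K1 : ℝ) (hL1 : 0 ≤ L1) (hK1 : 0 ≤ K1)
    (hr_nonneg : RewardNonneg r) (hr : RewardLip r L1)
    (hp_prob : IsKernel p) (hp : KernelLip p K1)
    (Ω : (A → ℝ) → ℝ) (Lreg : ℝ) (hLreg : 0 ≤ Lreg) (hΩ : OmegaLip Ω Lreg)
    (β : ℝ) (hβ0 : 0 < β) (hβ1 : β < 1) (hβK : β * K1 / 2 < 1)
    (μ : X → ℝ) (hμ : IsProb μ)
    (π π' : X → A → ℝ) (hπ : ∀ x, IsProb (π x)) (hπ' : ∀ x, IsProb (π' x))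
    (ε : ℝ) (hclose : ∀ x, l1 (π x) (π' x) ≤ ε)
    (J J' : X → ℝ)
    (hJ : ∀ x, J x =
      (∑ a, r x a μ * π x a) - Ω (π x) + β * ∑ y, J y * (∑ a, p x a μ y * π x a))
    (hJ' : ∀ x, J' x =
      (∑ a, r x a μ * π' x a) - Ω (π' x) + β * ∑ y, J' y * (∑ a, p x a μ y * π' x a))
    (hJlip : ∀ x y, |J x - J y| ≤ (L1 / (1 - β * K1 / 2)) * ind x y) :
    ∀ x, |J x - J' x| ≤
      (L1 + Lreg + β * K1 * (L1 / (1 - β * K1 / 2)) / 2) * ε / (1 - β) := by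
  set QL := L1 / (1 - β * K1 / 2) with hQLdef
  have hden : 0 < 1 - β * K1 / 2 := by linarith
  have hQL : 0 ≤ QL := div_nonneg hL1 (le_of_lt hden)
  have hε : 0 ≤ ε := le_trans (l1_nonneg _ _) (hclose (Classical.arbitrary X))
  -- max of |J x - J' x|
  obtain ⟨xM, -, hxM⟩ := Finset.exists_max_image (Finset.univ : Finset X)
    (fun x => |J x - J' x|) ⟨Classical.arbitrary X, Finset.mem_univ _⟩
  set M := |J xM - J' xM| with hMdef
  have hM0 : 0 ≤ M := abs_nonneg _
  have key : ∀ x, |J x - J' x| ≤ L1 * ε + Lreg * ε + β * (K1 * QL / 2 * ε) + β * M := by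
    intro x
    have hw0 : ∑ a, (π x a - π' x a) = 0 := by
      rw [Finset.sum_sub_distrib, (hπ x).2, (hπ' x).2]; ring
    have hl1πε : ∑ a, |π x a - π' x a| ≤ ε := hclose x
    -- term 1: reward
    have h1 : |(∑ a, r x a μ * π x a) - ∑ a, r x a μ * π' x a| ≤ L1 * ε := by
      have hrw : (∑ a, r x a μ * π x a) - ∑ a, r x a μ * π' x a
          = ∑ a, r x a μ * (π x a - π' x a) := by
        simp [mul_sub, Finset.sum_sub_distrib]
      rw [hrw]
      have hosc : ∀ a a', |r x a μ - r x a' μ| ≤ 2 * L1 := by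
        intro a a'
        have := hr x x a a' μ μ hμ hμ
        have h2 := ind_le_one a a'
        have h3 := ind_nonneg a a'
        simp only [ind_self, l1_self] at this
        nlinarith
      have := center_bound (fun a => r x a μ) (fun a => π x a - π' x a) (2 * L1) hosc hw0
      calc |∑ a, r x a μ * (π x a - π' x a)| ≤ 2 * L1 / 2 * ∑ a, |π x a - π' x a| := this
        _ ≤ L1 * ε := by
            have : 2 * L1 / 2 = L1 := by ring
            rw [this]; exact mul_le_mul_of_nonneg_left hl1πε hL1
    -- term 2: regularizer
    have h2 : |Ω (π x) - Ω (π' x)| ≤ Lreg * ε :=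
      le_trans (hΩ _ _ (hπ x) (hπ' x)) (mul_le_mul_of_nonneg_left (hclose x) hLreg)
    -- term 3: kernel difference
    have h3 : |(∑ y, J y * ∑ a, p x a μ y * π x a)
        - ∑ y, J y * ∑ a, p x a μ y * π' x a| ≤ K1 * QL / 2 * ε := by
      have hswap : (∑ y, J y * ∑ a, p x a μ y * π x a)
          - (∑ y, J y * ∑ a, p x a μ y * π' x a)
          = ∑ a, (∑ y, J y * p x a μ y) * (π x a - π' x a) := by
        simp only [Finset.mul_sum, ← Finset.sum_sub_distrib, Finset.sum_mul]
        rw [Finset.sum_comm]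
        apply Finset.sum_congr rfl
        intro y _
        apply Finset.sum_congr rfl
        intro a _
        ring
      rw [hswap]
      have hosc : ∀ a a', |(∑ y, J y * p x a μ y) - ∑ y, J y * p x a' μ y| ≤ K1 * QL := by
        intro a a'
        have hrw : (∑ y, J y * p x a μ y) - ∑ y, J y * p x a' μ y
            = ∑ y, J y * (p x a μ y - p x a' μ y) := by
          simp [mul_sub, Finset.sum_sub_distrib]
        have hw0' : ∑ y, (p x a μ y - p x a' μ y) = 0 := by
          rw [Finset.sum_sub_distrib, (hp_prob x a μ hμ).2, (hp_prob x a' μ hμ).2]; ring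
        have hJosc : ∀ y y', |J y - J y'| ≤ QL := by
          intro y y'
          refine le_trans (hJlip y y') ?_
          have h4 := ind_le_one y y'
          have h5 := ind_nonneg y y'
          nlinarith
        have hcb := center_bound J (fun y => p x a μ y - p x a' μ y) QL hJosc hw0'
        have hker := hp x x a a' μ μ hμ hμ
        simp only [ind_self, l1_self] at hker
        have hl1p : ∑ y, |p x a μ y - p x a' μ y| ≤ 2 * K1 := by
          have h2 := ind_le_one a a'
          have h3 := ind_nonneg a a'
          have : l1 (p x a μ) (p x a' μ) = ∑ y, |p x a μ y - p x a' μ y| := rfl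
          nlinarith [this ▸ hker]
        rw [hrw]
        calc |∑ y, J y * (p x a μ y - p x a' μ y)|
            ≤ QL / 2 * ∑ y, |p x a μ y - p x a' μ y| := hcb
          _ ≤ K1 * QL := by nlinarith
      have := center_bound (fun a => ∑ y, J y * p x a μ y)
        (fun a => π x a - π' x a) (K1 * QL) hosc hw0
      calc |∑ a, (∑ y, J y * p x a μ y) * (π x a - π' x a)|
          ≤ K1 * QL / 2 * ∑ a, |π x a - π' x a| := this
        _ ≤ K1 * QL / 2 * ε := by
            apply mul_le_mul_of_nonneg_left hl1πε
            positivity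
    -- term 4
    have h4 : |(∑ y, J y * ∑ a, p x a μ y * π' x a)
        - ∑ y, J' y * ∑ a, p x a μ y * π' x a| ≤ M := by
      have hrw : (∑ y, J y * ∑ a, p x a μ y * π' x a)
          - ∑ y, J' y * ∑ a, p x a μ y * π' x a
          = ∑ y, (J y - J' y) * ∑ a, p x a μ y * π' x a := by
        simp [sub_mul, Finset.sum_sub_distrib]
      have hPnn : ∀ y, 0 ≤ ∑ a, p x a μ y * π' x a := by
        intro y
        exact Finset.sum_nonneg fun a _ =>
          mul_nonneg ((hp_prob x a μ hμ).1 y) ((hπ' x).1 a)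
      have hPsum : ∑ y, ∑ a, p x a μ y * π' x a = 1 := by
        rw [Finset.sum_comm]
        have : ∀ a, ∑ y, p x a μ y * π' x a = π' x a := by
          intro a
          rw [← Finset.sum_mul, (hp_prob x a μ hμ).2, one_mul]
        simp only [this]
        exact (hπ' x).2
      rw [hrw]
      calc |∑ y, (J y - J' y) * ∑ a, p x a μ y * π' x a|
          ≤ ∑ y, |(J y - J' y) * ∑ a, p x a μ y * π' x a| := Finset.abs_sum_le_sum_abs _ _
        _ ≤ ∑ y, M * ∑ a, p x a μ y * π' x a := by
            apply Finset.sum_le_sum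
            intro y _
            rw [abs_mul, abs_of_nonneg (hPnn y)]
            exact mul_le_mul_of_nonneg_right (hxM y (Finset.mem_univ y)) (hPnn y)
        _ = M := by rw [← Finset.mul_sum, hPsum, mul_one]
    -- combine
    have hsplit : J x - J' x
        = ((∑ a, r x a μ * π x a) - ∑ a, r x a μ * π' x a)
          - (Ω (π x) - Ω (π' x))
          + β * (((∑ y, J y * ∑ a, p x a μ y * π x a)
                  - ∑ y, J y * ∑ a, p x a μ y * π' x a)
               + ((∑ y, J y * ∑ a, p x a μ y * π' x a)
                  - ∑ y, J' y * ∑ a, p x a μ y * π' x a)) := by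
      rw [hJ x, hJ' x]; ring
    set t1 := (∑ a, r x a μ * π x a) - ∑ a, r x a μ * π' x a with ht1
    set t2 := Ω (π x) - Ω (π' x) with ht2
    set t3 := (∑ y, J y * ∑ a, p x a μ y * π x a)
               - ∑ y, J y * ∑ a, p x a μ y * π' x a with ht3
    set t4 := (∑ y, J y * ∑ a, p x a μ y * π' x a)
               - ∑ y, J' y * ∑ a, p x a μ y * π' x a with ht4
    have hb : |J x - J' x| ≤ |t1 - t2| + β * |t3 + t4| := by
      rw [hsplit]
      refine (abs_add_le _ _).trans ?_
      rw [abs_mul, abs_of_pos hβ0]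
    have hb1 : |t1 - t2| ≤ |t1| + |t2| := by
      have := abs_add_le t1 (-t2)
      rw [abs_neg] at this
      rw [sub_eq_add_neg]
      exact this
    have hb2 : |t3 + t4| ≤ |t3| + |t4| := abs_add_le _ _
    have hb3 : β * |t3 + t4| ≤ β * (|t3| + |t4|) :=
      mul_le_mul_of_nonneg_left hb2 (le_of_lt hβ0)
    have hb4 : β * |t3| ≤ β * (K1 * QL / 2 * ε) :=
      mul_le_mul_of_nonneg_left h3 (le_of_lt hβ0)
    have hb5 : β * |t4| ≤ β * M := mul_le_mul_of_nonneg_left h4 (le_of_lt hβ0)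
    have hexp : β * (|t3| + |t4|) = β * |t3| + β * |t4| := by ring
    linarith
  -- conclude
  have hkeyM := key xM
  have hMfinal : M ≤ (L1 + Lreg + β * K1 * QL / 2) * ε / (1 - β) := by
    rw [le_div_iff₀ (by linarith : (0:ℝ) < 1 - β)]
    have hexp : β * (K1 * QL / 2 * ε) = β * K1 * QL / 2 * ε := by ring
    nlinarith
  intro x
  exact le_trans (le_trans (hxM x (Finset.mem_univ x)) hMfinal) (le_of_eq rfl)


end MFG
end

section
/- Let q : A → ℝ and define g : U → ℝ by g(u) := ⟨q,u⟩ − Ω(u). Let ĝ : U → ℝ be any function. Suppose u* ∈ U is a maximizer of g over U and û ∈ U is a maximizer of ĝ over U. Then ‖u* − û‖₁² ≤ (4/ρ) sup_{u∈U} |g(u) − ĝ(u)|. (Maximizer-perturbation estimate (perturbation2) in the proof of Theorem 3.) -/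
namespace MFG

open Finset

set_option maxHeartbeats 1000000 in
/-- maximizer-perturbation estimate (perturbation2):
`‖u* - û‖₁² ≤ (4/ρ) sup_{u ∈ U} |g(u) - ĝ(u)|`. -/
theorem statement15 {A : Type*} [Fintype A] [Nonempty A]
    (Ω : (A → ℝ) → ℝ) (DΩ : (A → ℝ) → (A → ℝ)) (ρ : ℝ) (hρ : 0 < ρ)
    (hΩ : StrongConvex Ω DΩ ρ)
    (q : A → ℝ) (ghat : (A → ℝ) → ℝ)
    (ustar : A → ℝ) (hustar : IsProb ustar)
    (hmax : ∀ u, IsProb u →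
      (∑ a, q a * u a) - Ω u ≤ (∑ a, q a * ustar a) - Ω ustar)
    (uhat : A → ℝ) (huhat : IsProb uhat)
    (hmaxhat : ∀ u, IsProb u → ghat u ≤ ghat uhat) :
    ∀ C : ℝ, (∀ u, IsProb u → |((∑ a, q a * u a) - Ω u) - ghat u| ≤ C) →
      (l1 ustar uhat) ^ 2 ≤ 4 / ρ * C := by
  intro C hC
  set d := l1 ustar uhat with hd
  have hd0 : 0 ≤ d := by
    rw [hd]; unfold l1; exact Finset.sum_nonneg fun a _ => abs_nonneg _
  -- bound on g(u*) - g(û)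
  have hC1 := hC ustar hustar
  have hC2 := hC uhat huhat
  have hgg := hmaxhat ustar hustar
  rw [abs_le] at hC1 hC2
  have h2C : ((∑ a, q a * ustar a) - Ω ustar) - ((∑ a, q a * uhat a) - Ω uhat) ≤ 2 * C := by
    linarith [hC1.2, hC2.1]
  -- key inequality for every t ∈ (0,1]
  have key : ∀ t : ℝ, 0 < t → t ≤ 1 → ρ * (1 - t) * d ^ 2 ≤ 4 * C := by
    intro t ht0 ht1
    set ut : A → ℝ := fun a => (1 - t) * ustar a + t * uhat a with hut_def
    have hut : IsProb ut := by
      constructor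
      · intro a
        have h1 := hustar.1 a
        have h2 := huhat.1 a
        have : (0:ℝ) ≤ 1 - t := by linarith
        positivity
      · have h1 := hustar.2
        have h2 := huhat.2
        simp only [hut_def]
        rw [Finset.sum_add_distrib, ← Finset.mul_sum, ← Finset.mul_sum, h1, h2]
        ring
    have hl1 : l1 ut ustar = t * d := by
      simp only [l1, hd, Finset.mul_sum]
      refine Finset.sum_congr rfl fun a _ => ?_
      have h : ut a - ustar a = t * (uhat a - ustar a) := by simp only [hut_def]; ring
      rw [h, abs_mul, abs_of_pos ht0, abs_sub_comm]
    have hl2 : l1 ut uhat = (1 - t) * d := by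
      simp only [l1, hd, Finset.mul_sum]
      refine Finset.sum_congr rfl fun a _ => ?_
      have h : ut a - uhat a = (1 - t) * (ustar a - uhat a) := by simp only [hut_def]; ring
      rw [h, abs_mul, abs_of_nonneg (by linarith : (0:ℝ) ≤ 1 - t)]
    have h1 := hΩ ut ustar hut hustar
    have h2 := hΩ ut uhat hut huhat
    rw [hl1] at h1
    rw [hl2] at h2
    have hS1 : ∑ a, DΩ ut a * (ustar a - ut a)
        = t * ∑ a, DΩ ut a * (ustar a - uhat a) := by
      rw [Finset.mul_sum]
      refine Finset.sum_congr rfl fun a _ => ?_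
      simp only [hut_def]; ring
    have hS2 : ∑ a, DΩ ut a * (uhat a - ut a)
        = -((1 - t) * ∑ a, DΩ ut a * (ustar a - uhat a)) := by
      rw [Finset.mul_sum, ← Finset.sum_neg_distrib]
      refine Finset.sum_congr rfl fun a _ => ?_
      simp only [hut_def]; ring
    rw [hS1] at h1
    rw [hS2] at h2
    have hq : ∑ a, q a * ut a
        = (1 - t) * (∑ a, q a * ustar a) + t * (∑ a, q a * uhat a) := by
      rw [Finset.mul_sum, Finset.mul_sum, ← Finset.sum_add_distrib]
      refine Finset.sum_congr rfl fun a _ => ?_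
      simp only [hut_def]; ring
    have hmx := hmax ut hut
    rw [hq] at hmx
    -- combine: (1-t)*h1 + t*h2 gives midpoint strong convexity along the segment
    have hmid : Ω ut + ρ / 2 * (t * (1 - t)) * d ^ 2
        ≤ (1 - t) * Ω ustar + t * Ω uhat := by
      nlinarith [mul_le_mul_of_nonneg_left h1 (by linarith : (0:ℝ) ≤ 1 - t),
        mul_le_mul_of_nonneg_left h2 ht0.le, sq_nonneg d, mul_pos ht0 ht0]
    -- combine with optimality of u* and divide by t
    have hfin : t * (ρ / 2 * (1 - t) * d ^ 2
        - (((∑ a, q a * ustar a) - Ω ustar) - ((∑ a, q a * uhat a) - Ω uhat))) ≤ 0 := by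
      nlinarith [hmid, hmx]
    have hfin2 : ρ / 2 * (1 - t) * d ^ 2
        ≤ ((∑ a, q a * ustar a) - Ω ustar) - ((∑ a, q a * uhat a) - Ω uhat) := by
      by_contra hcon
      push_neg at hcon
      nlinarith [hfin]
    nlinarith [hfin2, h2C]
  -- take t → 0
  have hmain : ρ * d ^ 2 ≤ 4 * C := by
    refine le_of_forall_pos_le_add fun ε hε => ?_
    set t : ℝ := min 1 (ε / (ρ * (d ^ 2 + 1))) with ht_def
    have hden : 0 < ρ * (d ^ 2 + 1) := by positivity
    have ht0 : 0 < t := lt_min one_pos (by positivity)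
    have ht1 : t ≤ 1 := min_le_left _ _
    have htle : t ≤ ε / (ρ * (d ^ 2 + 1)) := min_le_right _ _
    have htmul : t * (ρ * (d ^ 2 + 1)) ≤ ε := by
      rw [← le_div_iff₀ hden]; exact htle
    have hεt : ρ * t * d ^ 2 ≤ ε := by nlinarith [ht0.le, sq_nonneg d]
    have := key t ht0 ht1
    nlinarith
  rw [div_mul_eq_mul_div, le_div_iff₀ hρ]
  nlinarith [hmain]

end MFG
end

section
/- Let (ε,δ) ∈ (0,1)². Let μ ∈ 𝒫(X) and, for each x ∈ X, let ν_x ∈ 𝒫(X) (in the algorithm, ν_x = P(·|x,f_Q(x),μ)). Let {Y_t^x : x ∈ X, 1 ≤ t ≤ M} be independent random variables with Y_t^x distributed according to ν_x, and let ν̂_x := (1/M) ∑_{t=1}^M δ_{Y_t^x} be the empirical distributions. If M ≥ (|X|²/ε²) ln(2|X|²/δ), then with probability at least 1 − δ, ‖∑_{x∈X} ν̂_x(·) μ(x) − ∑_{x∈X} ν_x(·) μ(x)‖₁ ≤ ε. (Theorem 3 (Thm-H2): error bound for the random operator Ĥ2.) -/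
/-!
Each empirical frequency `ν̂_x(s)` is an average of `M` independent indicators with mean
`ν_x(s)`, so by Hoeffding's inequality it is farther than `ε/|X|` from `ν_x(s)` with probability
at most `2 exp(-2Mε²/|X|²) ≤ δ/|X|²`. A union bound over the `|X|²` pairs `(x, s)` makes all of
them `ε/|X|`-accurate with probability at least `1 - δ`; then every coordinate of
`∑_x ν̂_x μ(x)` is within `ε/|X|` of the corresponding coordinate of `∑_x ν_x μ(x)`, since `μ` is a
probability vector, and the `l1` distance is at most `ε`.
-/

namespace MFG

open Finset

open MeasureTheory ProbabilityTheory Real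
open scoped NNReal ENNReal

section Concentration

variable {Ω : Type*} [MeasurableSpace Ω] {P : Measure Ω}

lemma measureReal_abs_sum_ge_le_of_iIndepFun {ι : Type*} {X : ι → Ω → ℝ}
    (h_indep : iIndepFun X P) {c : ι → ℝ≥0} {s : Finset ι}
    (h_subG : ∀ i ∈ s, HasSubgaussianMGF (X i) (c i) P) {ε : ℝ} (hε : 0 ≤ ε) :
    P.real {ω | ε ≤ |∑ i ∈ s, X i ω|} ≤ 2 * exp (-ε ^ 2 / (2 * ∑ i ∈ s, c i)) := by
  have := h_indep.isProbabilityMeasure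
  have h_indep_neg : iIndepFun (fun i => -X i) P :=
    h_indep.comp (fun _ => Neg.neg) fun _ => measurable_neg
  have h_upper := HasSubgaussianMGF.measure_sum_ge_le_of_iIndepFun h_indep h_subG hε
  have h_lower := HasSubgaussianMGF.measure_sum_ge_le_of_iIndepFun h_indep_neg
    (fun i hi => (h_subG i hi).neg) hε
  have h_split : {ω | ε ≤ |∑ i ∈ s, X i ω|} ⊆
      {ω | ε ≤ ∑ i ∈ s, X i ω} ∪ {ω | ε ≤ ∑ i ∈ s, (-X i) ω} := by
    intro ω hω
    simpa [Finset.sum_neg_distrib] using le_abs.mp hω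
  calc P.real {ω | ε ≤ |∑ i ∈ s, X i ω|}
      ≤ P.real ({ω | ε ≤ ∑ i ∈ s, X i ω} ∪ {ω | ε ≤ ∑ i ∈ s, (-X i) ω}) :=
        measureReal_mono h_split
    _ ≤ _ := (measureReal_union_le _ _).trans (by linarith)

variable [IsProbabilityMeasure P] {S : Type*} [MeasurableSpace S] [MeasurableSingletonClass S]
  [DecidableEq S]

lemma hasSubgaussianMGF_ite_sub {Y : Ω → S} (hY : Measurable Y) {s : S} {p : ℝ} (hp : 0 ≤ p)
    (hYs : P {ω | Y ω = s} = ENNReal.ofReal p) :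
    HasSubgaussianMGF (fun ω => (if Y ω = s then (1 : ℝ) else 0) - p) (1 / 4) P := by
  have h_set : MeasurableSet {ω | Y ω = s} := hY (measurableSet_singleton s)
  have h_meas : Measurable fun ω => if Y ω = s then (1 : ℝ) else 0 :=
    Measurable.ite h_set measurable_const measurable_const
  have h_mean : P[fun ω => if Y ω = s then (1 : ℝ) else 0] = p := by
    rw [← ENNReal.toReal_ofReal hp, ← hYs, ← measureReal_def, ← integral_indicator_one h_set]
    simp only [Set.indicator_apply, Set.mem_ofPred_eq, Pi.one_apply]
  have h_range : ∀ᵐ ω ∂P, (if Y ω = s then (1 : ℝ) else 0) ∈ Set.Icc 0 1 :=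
    ae_of_all _ fun ω => by split_ifs <;> simp
  have := hasSubgaussianMGF_of_mem_Icc h_meas.aemeasurable h_range
  rw [h_mean] at this
  convert this using 2
  norm_num

lemma measureReal_abs_count_sub_ge_le {ι : Type*} [Fintype ι] {Y : ι → Ω → S}
    (hY : ∀ i, Measurable (Y i)) (h_indep : iIndepFun Y P) {s : S} {p : ℝ} (hp : 0 ≤ p)
    (hYs : ∀ i, P {ω | Y i ω = s} = ENNReal.ofReal p) {t : ℝ} (ht : 0 ≤ t) :
    P.real {ω | Fintype.card ι * t ≤
        |(∑ i, if Y i ω = s then (1 : ℝ) else 0) - Fintype.card ι * p|} ≤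
      2 * exp (-2 * Fintype.card ι * t ^ 2) := by
  have h_indep' : iIndepFun (fun i ω => (if Y i ω = s then (1 : ℝ) else 0) - p) P :=
    h_indep.comp (fun _ v => (if v = s then (1 : ℝ) else 0) - p) fun _ =>
      (Measurable.ite (measurableSet_singleton s) measurable_const measurable_const).sub_const p
  have h := measureReal_abs_sum_ge_le_of_iIndepFun h_indep' (s := Finset.univ)
    (fun i _ => hasSubgaussianMGF_ite_sub (hY i) hp (hYs i))
    (by positivity : 0 ≤ Fintype.card ι * t)
  have h_exp : -(Fintype.card ι * t) ^ 2 / (2 * ((∑ _i : ι, (1 / 4 : ℝ≥0) : ℝ≥0) : ℝ)) =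
      -2 * Fintype.card ι * t ^ 2 := by
    rcases eq_or_ne (Fintype.card ι : ℝ) 0 with hn | hn
    · simp [hn]
    · simp only [Finset.sum_const, Finset.card_univ, nsmul_eq_mul, NNReal.coe_mul,
        NNReal.coe_natCast, one_div, NNReal.coe_inv, NNReal.coe_ofNat]
      field_simp
      ring
  rw [h_exp] at h
  simpa only [Finset.sum_sub_distrib, Finset.sum_const, Finset.card_univ, nsmul_eq_mul] using h

end Concentration

lemma l1_mixture_le {X S : Type*} [Fintype X] [Fintype S] {μ : X → ℝ} (hμ : IsProb μ)
    {ν ν' : X → S → ℝ} {t : ℝ} (h : ∀ x s, |ν' x s - ν x s| ≤ t) :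
    l1 (fun s => ∑ x, ν' x s * μ x) (fun s => ∑ x, ν x s * μ x) ≤ Fintype.card S * t := by
  have h_coord : ∀ s, |∑ x, ν' x s * μ x - ∑ x, ν x s * μ x| ≤ t := fun s =>
    calc |∑ x, ν' x s * μ x - ∑ x, ν x s * μ x| = |∑ x, (ν' x s - ν x s) * μ x| := by
          simp only [sub_mul, Finset.sum_sub_distrib]
      _ ≤ ∑ x, |ν' x s - ν x s| * μ x := by
          refine (Finset.abs_sum_le_sum_abs _ _).trans_eq ?_
          simp only [abs_mul, abs_of_nonneg (hμ.1 _)]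
      _ ≤ ∑ x, t * μ x := Finset.sum_le_sum fun x _ => by gcongr; exacts [hμ.1 x, h x s]
      _ = t := by rw [← Finset.mul_sum, hμ.2, mul_one]
  calc l1 _ _ ≤ ∑ _s : S, t := Finset.sum_le_sum fun s _ => h_coord s
    _ = Fintype.card S * t := by simp

lemma ofReal_one_sub_card_mul_le_measure {Ω ι : Type*} [MeasurableSpace Ω] [Fintype ι]
    (P : Measure Ω) [IsProbabilityMeasure P] {B : ι → Set Ω} {η : ℝ} (hη : 0 ≤ η)
    (hB : ∀ i, P (B i) ≤ ENNReal.ofReal η) {A : Set Ω} (hA : ∀ ω, (∀ i, ω ∉ B i) → ω ∈ A) :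
    ENNReal.ofReal (1 - Fintype.card ι * η) ≤ P A := by
  have h_cover : Set.univ ⊆ (⋃ i, B i) ∪ A := fun ω _ =>
    or_iff_not_imp_left.2 fun hω => hA ω (by simpa using hω)
  have h_union : 1 ≤ ∑ i, P (B i) + P A :=
    calc 1 = P Set.univ := measure_univ.symm
      _ ≤ P (⋃ i, B i) + P A := (measure_mono h_cover).trans (measure_union_le _ _)
      _ ≤ ∑ i, P (B i) + P A := by gcongr; exact measure_iUnion_fintype_le P B
  calc ENNReal.ofReal (1 - Fintype.card ι * η) = 1 - ∑ _i : ι, ENNReal.ofReal η := by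
        rw [ENNReal.ofReal_sub _ (by positivity), ENNReal.ofReal_one, ENNReal.ofReal_mul (by simp),
          ENNReal.ofReal_natCast, Finset.sum_const, Finset.card_univ, nsmul_eq_mul]
    _ ≤ 1 - ∑ i, P (B i) := tsub_le_tsub_left (Finset.sum_le_sum fun i _ => hB i) 1
    _ ≤ P A := tsub_le_iff_left.2 h_union

lemma abs_div_sub_le_of_abs_sub_lt {c m p t : ℝ} (hm : 0 ≤ m) (h : |c - m * p| < m * t) :
    |c / m - p| ≤ t := by
  have hm' : 0 < m := hm.lt_of_ne fun h0 => by
    simp only [← h0, zero_mul, sub_zero] at h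
    exact (abs_nonneg c).not_gt h
  rw [← mul_le_mul_iff_of_pos_left hm', ← abs_of_pos hm', ← abs_mul, abs_of_pos hm']
  calc |m * (c / m - p)| = |c - m * p| := by congr 1; field_simp
    _ ≤ m * t := h.le

lemma two_mul_exp_le_of_log_le {n ε δ : ℝ} {M : ℕ} (hn : 0 < n) (hε : 0 < ε) (hδ : 0 < δ)
    (hM : n ^ 2 / ε ^ 2 * log (2 * n ^ 2 / δ) ≤ M) :
    2 * exp (-2 * M * (ε / n) ^ 2) ≤ δ / n ^ 2 := by
  have h_log : log (2 * n ^ 2 / δ) ≤ M * (ε / n) ^ 2 :=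
    calc log (2 * n ^ 2 / δ) = n ^ 2 / ε ^ 2 * log (2 * n ^ 2 / δ) * (ε / n) ^ 2 := by
          field_simp
      _ ≤ M * (ε / n) ^ 2 := by gcongr
  have h_nonneg : 0 ≤ (M : ℝ) * (ε / n) ^ 2 := by positivity
  calc 2 * exp (-2 * M * (ε / n) ^ 2) ≤ 2 * exp (-log (2 * n ^ 2 / δ)) := by
        gcongr; linarith
    _ = δ / n ^ 2 := by
        rw [exp_neg, exp_log (by positivity)]
        field_simp

theorem statement17_general {S : Type*} [Fintype S] [Nonempty S] [DecidableEq S]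
    [MeasurableSpace S] [MeasurableSingletonClass S]
    {W : Type*} [MeasurableSpace W] (P : MeasureTheory.Measure W)
    [MeasureTheory.IsProbabilityMeasure P]
    (ε δ : ℝ) (hε0 : 0 < ε) (hδ0 : 0 < δ)
    (μ : S → ℝ) (hμ : IsProb μ)
    (ν : S → S → ℝ) (hν : ∀ x, IsProb (ν x))
    (M : ℕ) (Y : S × Fin M → W → S)
    (hYmeas : ∀ i, Measurable (Y i))
    (hYindep : ProbabilityTheory.iIndepFun Y P)
    (hYdist : ∀ x t s, P {w | Y (x, t) w = s} = ENNReal.ofReal (ν x s))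
    (hM : ((Fintype.card S : ℝ) ^ 2 / ε ^ 2) *
        Real.log (2 * (Fintype.card S : ℝ) ^ 2 / δ) ≤ (M : ℝ)) :
    ENNReal.ofReal (1 - δ) ≤
      P {w | l1
          (fun s => ∑ x,
            ((∑ t : Fin M, if Y (x, t) w = s then (1 : ℝ) else 0) / (M : ℝ)) * μ x)
          (fun s => ∑ x, ν x s * μ x) ≤ ε} := by
  have hn : (0 : ℝ) < Fintype.card S := by exact_mod_cast Fintype.card_pos
  let count : S → S → W → ℝ := fun x s w => ∑ i : Fin M, if Y (x, i) w = s then (1 : ℝ) else 0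
  -- Phrased with counts rather than frequencies, so that `M = 0` needs no separate case.
  let bad : S × S → Set W := fun xs =>
    {w | M * (ε / Fintype.card S) ≤ |count xs.1 xs.2 w - M * ν xs.1 xs.2|}
  have h_bad : ∀ xs, P (bad xs) ≤ ENNReal.ofReal (δ / (Fintype.card S : ℝ) ^ 2) := by
    rintro ⟨x, s⟩
    have h_row := measureReal_abs_count_sub_ge_le (fun i => hYmeas (x, i))
      (hYindep.precomp (Prod.mk_right_injective x)) ((hν x).1 s) (fun i => hYdist x i s)
      (t := ε / Fintype.card S) (by positivity)
    rw [Fintype.card_fin] at h_row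
    rw [← ofReal_measureReal]
    exact ENNReal.ofReal_le_ofReal (h_row.trans (two_mul_exp_le_of_log_le hn hε0 hδ0 hM))
  have h_good : ∀ w, (∀ xs, w ∉ bad xs) →
      w ∈ {w | l1 (fun s => ∑ x, count x s w / M * μ x) (fun s => ∑ x, ν x s * μ x) ≤ ε} :=
    fun w hw => (l1_mixture_le hμ fun x s => abs_div_sub_le_of_abs_sub_lt M.cast_nonneg
        (not_le.1 (hw (x, s)))).trans_eq (mul_div_cancel₀ ε hn.ne')
  have h_card : (Fintype.card (S × S) : ℝ) * (δ / (Fintype.card S : ℝ) ^ 2) = δ := by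
    rw [Fintype.card_prod, Nat.cast_mul]
    field_simp
  rw [← h_card]
  exact ofReal_one_sub_card_mul_le_measure P (by positivity) h_bad h_good

/-- Theorem 3, Thm-H2: error bound for the random operator
`Ĥ2`: if `M ≥ (|X|²/ε²) ln(2|X|²/δ)` then, with probability at least `1 - δ`,
`‖∑_x ν̂_x(·) μ(x) - ∑_x ν_x(·) μ(x)‖₁ ≤ ε`. -/
theorem statement17 {S : Type*} [Fintype S] [Nonempty S] [DecidableEq S]
    [MeasurableSpace S] [MeasurableSingletonClass S]
    {W : Type*} [MeasurableSpace W] (P : MeasureTheory.Measure W)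
    [MeasureTheory.IsProbabilityMeasure P]
    (ε δ : ℝ) (hε0 : 0 < ε) (hε1 : ε < 1) (hδ0 : 0 < δ) (hδ1 : δ < 1)
    (μ : S → ℝ) (hμ : IsProb μ)
    (ν : S → S → ℝ) (hν : ∀ x, IsProb (ν x))
    (M : ℕ) (Y : S × Fin M → W → S)
    (hYmeas : ∀ i, Measurable (Y i))
    (hYindep : ProbabilityTheory.iIndepFun Y P)
    (hYdist : ∀ x t s, P {w | Y (x, t) w = s} = ENNReal.ofReal (ν x s))
    (hM : ((Fintype.card S : ℝ) ^ 2 / ε ^ 2) *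
        Real.log (2 * (Fintype.card S : ℝ) ^ 2 / δ) ≤ (M : ℝ)) :
    ENNReal.ofReal (1 - δ) ≤
      P {w | l1
          (fun s => ∑ x,
            ((∑ t : Fin M, if Y (x, t) w = s then (1 : ℝ) else 0) / (M : ℝ)) * μ x)
          (fun s => ∑ x, ν x s * μ x) ≤ ε} :=
  statement17_general P ε δ hε0 hδ0 μ hμ ν hν M Y hYmeas hYindep hYdist hM

end MFG
end
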